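/- Let ρ₁ = E[|Ω⟩⟨Ω|/⟨Ω|Ω⟩] where |Ω⟩ = (‖c‖₁/k)·Σ_{α=1}^k|ω_α⟩ with |ω_α⟩ i.i.d. random unit vectors satisfying E[|ω_α⟩] = |ψ⟩/‖c‖₁ for a unit vector ψ. Then ‖ρ₁ − |ψ⟩⟨ψ|‖₁ ≤ 2‖c‖₁²/k + √(Var[⟨Ω|Ω⟩]). -/

import Mathlib

/-!
By independence of the samples, `E[|Ω⟩⟨Ω|] = |ψ⟩⟨ψ| + (‖c‖₁² σ - |ψ⟩⟨ψ|) / k`, hence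
`ρ₁ - |ψ⟩⟨ψ| = E[(1/⟨Ω|Ω⟩ - 1) |Ω⟩⟨Ω|] + (‖c‖₁² σ - |ψ⟩⟨ψ|) / k` and, taking traces,
`μ = E⟨Ω|Ω⟩ = 1 + (‖c‖₁² - 1) / k`. The trace norm of a Hermitian `H` is `Re Tr(X H)` for
`X = sign H`, and `-1 ≤ X ≤ 1` gives `|Re⟨w|X|w⟩| ≤ ⟨w|w⟩`. The first term therefore contributes
at most `E|⟨Ω|Ω⟩ - 1| ≤ E|⟨Ω|Ω⟩ - μ| + (μ - 1) ≤ √Var[⟨Ω|Ω⟩] + (‖c‖₁² - 1) / k` (Jensen), and the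
second at most `(‖c‖₁² + 1) / k`.
-/

open Matrix
open scoped ComplexOrder

noncomputable section

/-- The dyad `|L⟩⟨R|` as a matrix. -/
def dyadM {d : ℕ} (L R : Fin d → ℂ) : Matrix (Fin d) (Fin d) ℂ :=
  Matrix.vecMulVec L (star R)

/-- The pure-state extent `ξ(Ψ)` with respect to a free set `S`. -/
def extent {d : ℕ} (S : Set (Fin d → ℂ)) (Ψ : Fin d → ℂ) : ℝ :=
  sInf {r : ℝ | ∃ (m : ℕ) (c : Fin m → ℂ) (φ : Fin m → (Fin d → ℂ)),
    (∀ j, φ j ∈ S) ∧ Ψ = ∑ j, c j • φ j ∧ r = (∑ j, ‖c j‖) ^ 2}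

/-- The dyadic negativity `Λ(ρ)` with respect to a free set `S`. -/
def dyadicNeg {d : ℕ} (S : Set (Fin d → ℂ)) (ρ : Matrix (Fin d) (Fin d) ℂ) : ℝ :=
  sInf {r : ℝ | ∃ (m : ℕ) (α : Fin m → ℂ) (L R : Fin m → (Fin d → ℂ)),
    (∀ j, L j ∈ S) ∧ (∀ j, R j ∈ S) ∧
    ρ = ∑ j, α j • dyadM (L j) (R j) ∧ r = ∑ j, ‖α j‖}

/-- The generalized robustness `Λ⁺(ρ)`: the maximum of `Tr[Wρ]` over positive
semidefinite witnesses `W` with `⟨φ|W|φ⟩ ≤ 1` for all free `φ`. -/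
def genRob {d : ℕ} (S : Set (Fin d → ℂ)) (ρ : Matrix (Fin d) (Fin d) ℂ) : ℝ :=
  sSup {r : ℝ | ∃ W : Matrix (Fin d) (Fin d) ℂ, W.PosSemidef ∧
    (∀ φ ∈ S, (star φ ⬝ᵥ (W *ᵥ φ)).re ≤ 1) ∧ r = ((W * ρ).trace).re}

/-- The mixed-state extent `Ξ(ρ)`: the convex-roof extension of the extent. -/
def mixedExtent {d : ℕ} (S : Set (Fin d → ℂ)) (ρ : Matrix (Fin d) (Fin d) ℂ) : ℝ :=
  sInf {r : ℝ | ∃ (m : ℕ) (p : Fin m → ℝ) (Ψ : Fin m → (Fin d → ℂ)),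
    (∀ j, 0 ≤ p j) ∧ (∑ j, p j) = 1 ∧ (∀ j, star (Ψ j) ⬝ᵥ Ψ j = 1) ∧
    ρ = ∑ j, (p j : ℂ) • dyadM (Ψ j) (Ψ j) ∧ r = ∑ j, p j * extent S (Ψ j)}

/-- The trace norm (Schatten 1-norm) of a complex matrix: the sum of the square
roots of the eigenvalues of `Aᴴ * A`. -/
def traceNorm {d : ℕ} (A : Matrix (Fin d) (Fin d) ℂ) : ℝ :=
  ∑ i, Real.sqrt ((Matrix.isHermitian_conjTranspose_mul_self A).eigenvalues i)

/-- The squared Euclidean norm `⟨w|w⟩` of a complex vector. -/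
def nsq {d : ℕ} (w : Fin d → ℂ) : ℝ := (star w ⬝ᵥ w).re

/-- The random sparsified vector `|Ω⟩ = (‖c‖₁/k)·Σ_α |ω_α⟩`, for the outcome in
which the `α`-th sample takes the value `v (g α)`. -/
def sparseVec {d : ℕ} {J : Type*} (c1 : ℝ) (k : ℕ) (v : J → Fin d → ℂ)
    (g : Fin k → J) : Fin d → ℂ :=
  ((c1 : ℂ) / (k : ℂ)) • ∑ α, v (g α)

/-- The probability of the i.i.d. outcome `g` under the single-sample
distribution `p`. -/
def prodProb {J : Type*} (p : J → ℝ) {k : ℕ} (g : Fin k → J) : ℝ := ∏ α, p (g α)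

/-- The mean `E[⟨Ω|Ω⟩]` of the squared norm of the sparsified vector. -/
def meanNsq {d : ℕ} {J : Type*} [Fintype J] (p : J → ℝ) (c1 : ℝ) (k : ℕ)
    (v : J → Fin d → ℂ) : ℝ :=
  ∑ g : Fin k → J, prodProb p g * nsq (sparseVec c1 k v g)

/-- The variance `Var[⟨Ω|Ω⟩]` of the squared norm of the sparsified vector. -/
def varNsq {d : ℕ} {J : Type*} [Fintype J] (p : J → ℝ) (c1 : ℝ) (k : ℕ)
    (v : J → Fin d → ℂ) : ℝ :=
  ∑ g : Fin k → J, prodProb p g * (nsq (sparseVec c1 k v g) - meanNsq p c1 k v) ^ 2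

/-- The constant `C = ‖c‖₁²·⟨ψ|σ|ψ⟩` with `σ = E[|ω_α⟩⟨ω_α|]`. -/
def Cconst {d : ℕ} {J : Type*} [Fintype J] (p : J → ℝ) (v : J → Fin d → ℂ)
    (ψ : Fin d → ℂ) (c1 : ℝ) : ℝ :=
  c1 ^ 2 * (star ψ ⬝ᵥ ((∑ j, (p j : ℂ) • dyadM (v j) (v j)) *ᵥ ψ)).re

/-- The ensemble `ρ₁ = E[|Ω⟩⟨Ω|/⟨Ω|Ω⟩]` of normalized sparsified states. -/
def rhoOne {d : ℕ} {J : Type*} [Fintype J] (p : J → ℝ) (c1 : ℝ) (k : ℕ)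
    (v : J → Fin d → ℂ) : Matrix (Fin d) (Fin d) ℂ :=
  ∑ g : Fin k → J, ((prodProb p g / nsq (sparseVec c1 k v g) : ℝ) : ℂ) •
    dyadM (sparseVec c1 k v g) (sparseVec c1 k v g)

open scoped MatrixOrder

lemma dyadM_apply {d : ℕ} (L R : Fin d → ℂ) (x y : Fin d) :
    dyadM L R x y = L x * star (R y) :=
  vecMulVec_apply ..

lemma isHermitian_dyadM {d : ℕ} (w : Fin d → ℂ) : (dyadM w w).IsHermitian := by
  ext i j
  simp [dyadM_apply, mul_comm]

lemma isHermitian_sum_ofReal_smul_dyadM {d : ℕ} {ι : Type*} [Fintype ι] (c : ι → ℝ)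
    (w : ι → Fin d → ℂ) : (∑ j, (c j : ℂ) • dyadM (w j) (w j)).IsHermitian :=
  isSelfAdjoint_sum _ fun j _ =>
    IsSelfAdjoint.smul (Complex.conj_ofReal (c j)) (isHermitian_dyadM (w j))

lemma trace_mul_dyadM {d : ℕ} (X : Matrix (Fin d) (Fin d) ℂ) (w : Fin d → ℂ) :
    (X * dyadM w w).trace = star w ⬝ᵥ (X *ᵥ w) := by
  rw [dyadM, trace_mul_comm, vecMulVec_mul, trace_vecMulVec, dotProduct_comm, ← dotProduct_mulVec]

lemma re_trace_dyadM {d : ℕ} (w : Fin d → ℂ) : (dyadM w w).trace.re = nsq w := by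
  rw [← Matrix.one_mul (dyadM w w), trace_mul_dyadM, one_mulVec, nsq]

lemma dyadM_smul_self {d : ℕ} (a : ℂ) (w : Fin d → ℂ) :
    dyadM (a • w) (a • w) = (a * star a) • dyadM w w := by
  rw [dyadM, star_smul, smul_vecMulVec, vecMulVec_smul, smul_smul, mul_comm, dyadM]

lemma dyadM_sparseVec {d : ℕ} {J : Type*} (c1 : ℝ) (k : ℕ) (v : J → Fin d → ℂ)
    (g : Fin k → J) :
    dyadM (sparseVec c1 k v g) (sparseVec c1 k v g) =
      (c1 / k) ^ 2 • ∑ α, ∑ β, dyadM (v (g α)) (v (g β)) := by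
  ext x y
  simp only [dyadM_apply, sparseVec, Matrix.smul_apply, Matrix.sum_apply, Finset.sum_apply,
    Pi.smul_apply, smul_eq_mul, ← Finset.sum_mul_sum, star_mul', star_sum, Complex.real_smul]
  simp only [Complex.star_def, map_div₀, Complex.conj_ofReal, Complex.conj_natCast]
  push_cast
  ring

lemma Matrix.IsHermitian.trace_cfc {n 𝕜 : Type*} [Fintype n] [DecidableEq n] [RCLike 𝕜]
    {A : Matrix n n 𝕜} (hA : A.IsHermitian) (f : ℝ → ℝ) :
    (cfc f A).trace = ∑ i, (f (hA.eigenvalues i) : 𝕜) := by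
  rw [hA.cfc_eq, IsHermitian.cfc, Unitary.conjStarAlgAut_apply, trace_mul_cycle,
    Unitary.coe_star_mul_self, Matrix.one_mul, trace_diagonal]
  rfl

lemma traceNorm_eq_re_trace_abs {d : ℕ} (A : Matrix (Fin d) (Fin d) ℂ) :
    traceNorm A = (CFC.abs A).trace.re := by
  rw [CFC.abs, star_eq_conjTranspose,
    CFC.sqrt_eq_real_sqrt _ (posSemidef_conjTranspose_mul_self A).nonneg, cfcₙ_eq_cfc,
    (isHermitian_conjTranspose_mul_self A).trace_cfc, Complex.re_sum]
  rfl

lemma Matrix.IsHermitian.cfcAbs_eq_cfc_sign_mul {n 𝕜 : Type*} [Fintype n] [DecidableEq n]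
    [RCLike 𝕜] {A : Matrix n n 𝕜} (hA : A.IsHermitian) :
    CFC.abs A = cfc (fun x : ℝ => (SignType.sign x : ℝ)) A * A := by
  conv_rhs => arg 2; rw [← cfc_id' ℝ A hA.isSelfAdjoint]
  rw [← cfc_mul _ _ A (A.finite_real_spectrum.continuousOn _),
    CFC.abs_eq_cfc_norm A hA.isSelfAdjoint]
  simp only [Real.norm_eq_abs, sign_mul_self]

lemma abs_re_dotProduct_mulVec_le_nsq {d : ℕ} {X : Matrix (Fin d) (Fin d) ℂ}
    (hX₁ : -1 ≤ X) (hX₂ : X ≤ 1) (w : Fin d → ℂ) :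
    |(star w ⬝ᵥ (X *ᵥ w)).re| ≤ nsq w := by
  have h₁ := (le_iff.mp hX₁).dotProduct_mulVec_nonneg w
  have h₂ := (le_iff.mp hX₂).dotProduct_mulVec_nonneg w
  rw [sub_neg_eq_add, add_mulVec, one_mulVec, dotProduct_add] at h₁
  rw [sub_mulVec, one_mulVec, dotProduct_sub] at h₂
  rw [abs_le, nsq]
  constructor
  · have := (Complex.le_def.mp h₁).1
    simp only [Complex.zero_re, Complex.add_re] at this
    linarith
  · have := (Complex.le_def.mp h₂).1
    simp only [Complex.zero_re, Complex.sub_re] at this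
    linarith

lemma re_trace_mul_sum_ofReal_smul_dyadM_le {d : ℕ} {X : Matrix (Fin d) (Fin d) ℂ}
    (hX₁ : -1 ≤ X) (hX₂ : X ≤ 1) {ι : Type*} [Fintype ι] (c : ι → ℝ) (w : ι → Fin d → ℂ) :
    (X * ∑ j, (c j : ℂ) • dyadM (w j) (w j)).trace.re ≤ ∑ j, |c j| * nsq (w j) := by
  simp only [Matrix.mul_sum, Matrix.mul_smul, trace_sum, trace_smul, trace_mul_dyadM,
    Complex.re_sum, smul_eq_mul, Complex.re_ofReal_mul]
  refine Finset.sum_le_sum fun j _ => (le_abs_self _).trans ?_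
  rw [abs_mul]
  exact mul_le_mul_of_nonneg_left (abs_re_dotProduct_mulVec_le_nsq hX₁ hX₂ (w j)) (abs_nonneg _)

lemma Matrix.IsHermitian.exists_traceNorm_eq_re_trace_mul {d : ℕ}
    {H : Matrix (Fin d) (Fin d) ℂ} (hH : H.IsHermitian) :
    ∃ X : Matrix (Fin d) (Fin d) ℂ, -1 ≤ X ∧ X ≤ 1 ∧ traceNorm H = (X * H).trace.re := by
  refine ⟨cfc (fun x : ℝ => (SignType.sign x : ℝ)) H, ?_, ?_, ?_⟩
  · simpa using algebraMap_le_cfc (fun x : ℝ => (SignType.sign x : ℝ)) (-1) H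
      (fun x _ => by rcases SignType.sign x with _ | _ | _ <;> simp)
      (H.finite_real_spectrum.continuousOn _)
  · exact cfc_le_one _ _ fun x _ => by rcases SignType.sign x with _ | _ | _ <;> simp
  · rw [traceNorm_eq_re_trace_abs, hH.cfcAbs_eq_cfc_sign_mul]

section Sampling

variable {ι J R : Type*} [Fintype ι] [DecidableEq ι] [Fintype J] [CommSemiring R] {p : J → R}

lemma sum_prod_mul_prod_eq_prod_sum (F : ι → J → R) :
    ∑ g : ι → J, (∏ γ, p (g γ)) * ∏ γ, F γ (g γ) = ∏ γ, ∑ j, p j * F γ j := by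
  simp only [Fintype.prod_sum, Finset.prod_mul_distrib]

lemma sum_prod_mul_apply (hp : ∑ j, p j = 1) (α : ι) (A : J → R) :
    ∑ g : ι → J, (∏ γ, p (g γ)) * A (g α) = ∑ j, p j * A j := by
  have key := sum_prod_mul_prod_eq_prod_sum (p := p) fun γ j => if γ = α then A j else 1
  simp only [Finset.prod_ite_eq', Finset.mem_univ, if_true] at key
  rw [key, Finset.prod_eq_single α (fun γ _ hγ => by simp [hγ, hp]) (by simp)]
  simp

lemma sum_prod_mul_apply_mul_apply (hp : ∑ j, p j = 1) {α β : ι} (hαβ : α ≠ β)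
    (A B : J → R) :
    ∑ g : ι → J, (∏ γ, p (g γ)) * (A (g α) * B (g β)) =
      (∑ j, p j * A j) * ∑ j, p j * B j := by
  let F : ι → J → R := fun γ j => if γ = α then A j else if γ = β then B j else 1
  have hF : ∀ g : ι → J, ∏ γ, F γ (g γ) = A (g α) * B (g β) := fun g => by
    rw [Finset.prod_eq_mul α β hαβ (fun γ _ hγ => by simp [F, hγ]) (by simp) (by simp)]
    simp [F, hαβ.symm]
  rw [← funext fun g => congrArg _ (hF g), sum_prod_mul_prod_eq_prod_sum,
    Finset.prod_eq_mul α β hαβ (fun γ _ hγ => by simp [F, hγ, hp]) (by simp) (by simp)]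
  simp [F, hαβ.symm]

end Sampling

lemma sum_sum_ite_eq_smul {ι M : Type*} [Fintype ι] [DecidableEq ι] [AddCommGroup M]
    (S T : M) :
    ∑ α : ι, ∑ β : ι, (if α = β then S else T) =
      Fintype.card ι • (S - T) + Fintype.card ι ^ 2 • T := by
  have h : ∀ α β : ι, (if α = β then S else T) = (if α = β then S - T else 0) + T := by
    intro α β; split_ifs <;> simp
  simp only [h, Finset.sum_add_distrib, Finset.sum_ite_eq, Finset.mem_univ, if_true,
    Finset.sum_const, Finset.card_univ, sq, mul_smul]

lemma sum_mul_abs_le_sqrt_sum_mul_sq {ι : Type*} [Fintype ι] {P : ι → ℝ} (hP : ∀ i, 0 ≤ P i)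
    (hP1 : ∑ i, P i = 1) (y : ι → ℝ) :
    ∑ i, P i * |y i| ≤ √(∑ i, P i * y i ^ 2) := by
  refine Real.le_sqrt_of_sq_le ?_
  simpa only [smul_eq_mul, sq_abs] using (convexOn_pow 2).map_sum_le (t := Finset.univ)
    (fun i _ => hP i) hP1 (fun i _ => abs_nonneg (y i))

lemma sum_mul_abs_sub_le {ι : Type*} [Fintype ι] {P : ι → ℝ} (hP : ∀ i, 0 ≤ P i)
    (hP1 : ∑ i, P i = 1) (x : ι → ℝ) (a b : ℝ) :
    ∑ i, P i * |x i - a| ≤ √(∑ i, P i * (x i - b) ^ 2) + |b - a| := by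
  calc ∑ i, P i * |x i - a| ≤ ∑ i, (P i * |x i - b| + P i * |b - a|) := by
        refine Finset.sum_le_sum fun i _ => ?_
        rw [← mul_add]
        exact mul_le_mul_of_nonneg_left (abs_sub_le _ _ _) (hP i)
    _ ≤ √(∑ i, P i * (x i - b) ^ 2) + |b - a| := by
        rw [Finset.sum_add_distrib, ← Finset.sum_mul, hP1, one_mul]
        gcongr
        exact sum_mul_abs_le_sqrt_sum_mul_sq hP hP1 _

lemma abs_div_sub_mul {P n : ℝ} (hP : 0 ≤ P) (hn : 0 < n) : |P / n - P| * n = P * |n - 1| :=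
  calc |P / n - P| * n = |(P / n - P) * n| := by rw [abs_mul, abs_of_pos hn]
    _ = |P * (1 - n)| := by rw [sub_mul, div_mul_cancel₀ _ hn.ne', mul_one_sub]
    _ = P * |n - 1| := by rw [abs_mul, abs_of_nonneg hP, abs_sub_comm]

lemma prodProb_nonneg {J : Type*} {p : J → ℝ} (hp : ∀ j, 0 ≤ p j) {k : ℕ} (g : Fin k → J) :
    0 ≤ prodProb p g :=
  Finset.prod_nonneg fun α _ => hp (g α)

section Ensemble

variable {d : ℕ} {J : Type*} [Fintype J] {p : J → ℝ}

lemma sum_prodProb (hp1 : ∑ j, p j = 1) (k : ℕ) : ∑ g : Fin k → J, prodProb p g = 1 := by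
  simp [prodProb, ← Fintype.prod_sum, hp1]

lemma sum_prodProb_smul_dyadM_sample (hp1 : ∑ j, p j = 1) (v : J → Fin d → ℂ) {k : ℕ}
    (α β : Fin k) :
    ∑ g : Fin k → J, (prodProb p g : ℂ) • dyadM (v (g α)) (v (g β)) =
      if α = β then ∑ j, (p j : ℂ) • dyadM (v j) (v j)
      else dyadM (∑ j, (p j : ℂ) • v j) (∑ j, (p j : ℂ) • v j) := by
  have hp1' : ∑ j, (p j : ℂ) = 1 := by exact_mod_cast hp1
  split_ifs with h <;> ext x y <;>
    simp only [Matrix.sum_apply, Matrix.smul_apply, dyadM_apply, prodProb, Complex.ofReal_prod,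
      smul_eq_mul, Finset.sum_apply, Pi.smul_apply, star_sum, star_mul', Complex.star_def,
      Complex.conj_ofReal]
  · subst h
    exact sum_prod_mul_apply hp1' α fun j => v j x * star (v j y)
  · exact sum_prod_mul_apply_mul_apply hp1' h (fun j => v j x) fun j => (starRingEnd ℂ) (v j y)

lemma sum_prodProb_smul_dyadM_sparseVec (hp1 : ∑ j, p j = 1) (c1 : ℝ) (k : ℕ)
    (v : J → Fin d → ℂ) :
    ∑ g : Fin k → J, (prodProb p g : ℂ) • dyadM (sparseVec c1 k v g) (sparseVec c1 k v g) =
      (c1 / k) ^ 2 • (k • (∑ j, (p j : ℂ) • dyadM (v j) (v j) -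
          dyadM (∑ j, (p j : ℂ) • v j) (∑ j, (p j : ℂ) • v j)) +
        k ^ 2 • dyadM (∑ j, (p j : ℂ) • v j) (∑ j, (p j : ℂ) • v j)) := by
  simp_rw [dyadM_sparseVec, smul_comm _ ((c1 / k) ^ 2), Finset.smul_sum]
  rw [Finset.sum_comm]
  conv_lhs => arg 2; ext α; rw [Finset.sum_comm]
  simp_rw [← Finset.smul_sum, sum_prodProb_smul_dyadM_sample hp1, sum_sum_ite_eq_smul,
    Fintype.card_fin]

lemma sum_prodProb_smul_dyadM_sparseVec_of_mean (hp1 : ∑ j, p j = 1) {c1 : ℝ} (hc1 : c1 ≠ 0)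
    {k : ℕ} (hk : k ≠ 0) {v : J → Fin d → ℂ} {ψ : Fin d → ℂ}
    (hmean : ∑ j, (p j : ℂ) • v j = (c1 : ℂ)⁻¹ • ψ) :
    ∑ g : Fin k → J, (prodProb p g : ℂ) • dyadM (sparseVec c1 k v g) (sparseVec c1 k v g) =
      dyadM ψ ψ + (k : ℝ)⁻¹ • (c1 ^ 2 • ∑ j, (p j : ℂ) • dyadM (v j) (v j) - dyadM ψ ψ) := by
  rw [sum_prodProb_smul_dyadM_sparseVec hp1, hmean, dyadM_smul_self]
  match_scalars
  · simp only [Complex.coe_algebraMap]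
    field_simp
  · simp only [Complex.coe_algebraMap, Complex.star_def, map_inv₀, Complex.conj_ofReal]
    field_simp
    ring

lemma meanNsq_eq (hp1 : ∑ j, p j = 1) {c1 : ℝ} (hc1 : c1 ≠ 0) {k : ℕ} (hk : k ≠ 0)
    {v : J → Fin d → ℂ} (hv : ∀ j, nsq (v j) = 1) {ψ : Fin d → ℂ} (hψ : nsq ψ = 1)
    (hmean : ∑ j, (p j : ℂ) • v j = (c1 : ℂ)⁻¹ • ψ) :
    meanNsq p c1 k v = 1 + (c1 ^ 2 - 1) / k := by
  have h := congrArg (fun M => M.trace.re)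
    (sum_prodProb_smul_dyadM_sparseVec_of_mean hp1 hc1 hk hmean)
  simp only [trace_sum, trace_add, trace_sub, trace_smul, Complex.re_sum, Complex.add_re,
    Complex.sub_re, Complex.smul_re, smul_eq_mul, Complex.re_ofReal_mul, re_trace_dyadM, hv,
    hψ, mul_one, hp1] at h
  rw [meanNsq, h]
  ring

lemma rhoOne_sub_dyadM_eq (hp1 : ∑ j, p j = 1) {c1 : ℝ} (hc1 : c1 ≠ 0) {k : ℕ} (hk : k ≠ 0)
    {v : J → Fin d → ℂ} {ψ : Fin d → ℂ} (hmean : ∑ j, (p j : ℂ) • v j = (c1 : ℂ)⁻¹ • ψ) :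
    rhoOne p c1 k v - dyadM ψ ψ =
      ∑ g : Fin k → J, ((prodProb p g / nsq (sparseVec c1 k v g) - prodProb p g : ℝ) : ℂ) •
          dyadM (sparseVec c1 k v g) (sparseVec c1 k v g) +
        (k : ℝ)⁻¹ • (c1 ^ 2 • ∑ j, (p j : ℂ) • dyadM (v j) (v j) - dyadM ψ ψ) := by
  simp only [Complex.ofReal_sub, sub_smul, Finset.sum_sub_distrib,
    sum_prodProb_smul_dyadM_sparseVec_of_mean hp1 hc1 hk hmean]
  rw [rhoOne]
  abel

lemma sum_prodProb_mul_abs_nsq_sparseVec_sub_one_le (hp : ∀ j, 0 ≤ p j) (hp1 : ∑ j, p j = 1)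
    {c1 : ℝ} (hc1 : 1 ≤ c1) {k : ℕ} (hk : k ≠ 0) {v : J → Fin d → ℂ} (hv : ∀ j, nsq (v j) = 1)
    {ψ : Fin d → ℂ} (hψ : nsq ψ = 1) (hmean : ∑ j, (p j : ℂ) • v j = (c1 : ℂ)⁻¹ • ψ) :
    ∑ g : Fin k → J, prodProb p g * |nsq (sparseVec c1 k v g) - 1| ≤
      √(varNsq p c1 k v) + (c1 ^ 2 - 1) / k := by
  have hc1' : 1 ≤ c1 ^ 2 := one_le_pow₀ hc1
  calc _ ≤ √(varNsq p c1 k v) + |meanNsq p c1 k v - 1| :=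
        sum_mul_abs_sub_le (prodProb_nonneg hp) (sum_prodProb hp1 k) _ _ _
    _ = √(varNsq p c1 k v) + (c1 ^ 2 - 1) / k := by
        rw [meanNsq_eq hp1 (by positivity) hk hv hψ hmean, add_sub_cancel_left,
          abs_of_nonneg (by have := sub_nonneg.mpr hc1'; positivity)]

lemma re_trace_mul_rhoOne_sub_dyadM_le {X : Matrix (Fin d) (Fin d) ℂ} (hX₁ : -1 ≤ X)
    (hX₂ : X ≤ 1) (hp : ∀ j, 0 ≤ p j) (hp1 : ∑ j, p j = 1) {c1 : ℝ} (hc1 : c1 ≠ 0) {k : ℕ}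
    (hk : k ≠ 0) {v : J → Fin d → ℂ} (hv : ∀ j, nsq (v j) = 1) {ψ : Fin d → ℂ}
    (hψ : nsq ψ = 1) (hmean : ∑ j, (p j : ℂ) • v j = (c1 : ℂ)⁻¹ • ψ)
    (hpos : ∀ g : Fin k → J, 0 < nsq (sparseVec c1 k v g)) :
    (X * (rhoOne p c1 k v - dyadM ψ ψ)).trace.re ≤
      ∑ g : Fin k → J, prodProb p g * |nsq (sparseVec c1 k v g) - 1| + (c1 ^ 2 + 1) / k := by
  have hΩ := (re_trace_mul_sum_ofReal_smul_dyadM_le hX₁ hX₂ _ _).trans_eq <|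
    Finset.sum_congr rfl fun g _ => abs_div_sub_mul (prodProb_nonneg hp g) (hpos g)
  have hσ : (X * ∑ j, (p j : ℂ) • dyadM (v j) (v j)).trace.re ≤ 1 := by
    simpa [abs_of_nonneg (hp _), hv, hp1] using re_trace_mul_sum_ofReal_smul_dyadM_le hX₁ hX₂ p v
  have hψX : -(X * dyadM ψ ψ).trace.re ≤ 1 := by
    rw [trace_mul_dyadM, ← hψ]
    exact (neg_le_abs _).trans (abs_re_dotProduct_mulVec_le_nsq hX₁ hX₂ ψ)
  rw [rhoOne_sub_dyadM_eq hp1 hc1 hk hmean, Matrix.mul_add, trace_add, Complex.add_re,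
    Matrix.mul_smul, trace_smul, Complex.smul_re, Matrix.mul_sub, Matrix.mul_smul, trace_sub,
    trace_smul, Complex.sub_re, Complex.smul_re, smul_eq_mul, smul_eq_mul, inv_mul_eq_div]
  gcongr
  nlinarith [sq_nonneg c1]

end Ensemble

/-- **Ensemble sampling lemma.**  Let `ρ₁ = E[|Ω⟩⟨Ω|/⟨Ω|Ω⟩]` where
`|Ω⟩ = (‖c‖₁/k)·Σ_α|ω_α⟩` with `|ω_α⟩` i.i.d. random unit vectors satisfying
`E[|ω_α⟩] = |ψ⟩/‖c‖₁` for a unit vector `ψ`.  Then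
`‖ρ₁ − |ψ⟩⟨ψ|‖₁ ≤ 2‖c‖₁²/k + √(Var[⟨Ω|Ω⟩])`. -/
theorem ensemble_sampling_lemma {d : ℕ} {J : Type*} [Fintype J]
    (p : J → ℝ) (v : J → Fin d → ℂ) (ψ : Fin d → ℂ) (c1 : ℝ) (k : ℕ)
    (hk : 1 ≤ k)
    (hp : ∀ j, 0 ≤ p j) (hp1 : ∑ j, p j = 1)
    (hv : ∀ j, nsq (v j) = 1) (hψ : nsq ψ = 1) (hc1 : 1 ≤ c1)
    (hmean : ∑ j, (p j : ℂ) • v j = ((c1 : ℂ))⁻¹ • ψ)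
    (hpos : ∀ g : Fin k → J, 0 < nsq (sparseVec c1 k v g)) :
    traceNorm (rhoOne p c1 k v - dyadM ψ ψ) ≤
      2 * c1 ^ 2 / (k : ℝ) + Real.sqrt (varNsq p c1 k v) := by
  have hk0 : k ≠ 0 := by omega
  have hρ : (rhoOne p c1 k v - dyadM ψ ψ).IsHermitian :=
    (isHermitian_sum_ofReal_smul_dyadM _ _).sub (isHermitian_dyadM ψ)
  obtain ⟨X, hX₁, hX₂, hnorm⟩ := hρ.exists_traceNorm_eq_re_trace_mul
  calc traceNorm (rhoOne p c1 k v - dyadM ψ ψ)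
      = (X * (rhoOne p c1 k v - dyadM ψ ψ)).trace.re := hnorm
    _ ≤ ∑ g : Fin k → J, prodProb p g * |nsq (sparseVec c1 k v g) - 1| + (c1 ^ 2 + 1) / k :=
        re_trace_mul_rhoOne_sub_dyadM_le hX₁ hX₂ hp hp1 (by positivity) hk0 hv hψ hmean hpos
    _ ≤ √(varNsq p c1 k v) + (c1 ^ 2 - 1) / k + (c1 ^ 2 + 1) / k := by
        gcongr
        exact sum_prodProb_mul_abs_nsq_sparseVec_sub_one_le hp hp1 hc1 hk0 hv hψ hmean
    _ = 2 * c1 ^ 2 / k + √(varNsq p c1 k v) := by ring
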